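/- For the cost function g(x) = k(x,x) − 2k(x,y) − 2 Σ_{i=1}^n β_i [k(x,z_i) − μ_z(x)] with k differentiable positive definite, the gradient at x = y satisfies ∇_x g(x)|_{x=y} = − M_{z,y} H β, where M_{z,y} = 2[∇_x k(x,z_1)|_{x=y}, ..., ∇_x k(x,z_n)|_{x=y}] is the d×n matrix of kernel gradients and H = I − (1/n) 1_{n×n} is the centering matrix. -/

import Mathlib

/-!
Positive definiteness with weights `(1, -1)` at the points `x, y` gives
`k(x,x) - 2k(x,y) ≥ -k(y,y)`, so `y` minimises `x ↦ k(x,x) - 2k(x,y)` and the gradient of that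
part vanishes at `y`. The remaining part of the cost is a linear combination of the sections
`k(·, zⱼ)`, whose coefficients are the entries of the centred vector `Hβ`.
-/

open RealInnerProductSpace

namespace HasGradientAt

variable {E : Type*} [NormedAddCommGroup E] [InnerProductSpace ℝ E] [CompleteSpace E]
  {f g : E → ℝ} {f' g' x : E}

theorem fun_sub (hf : HasGradientAt f f' x) (hg : HasGradientAt g g' x) :
    HasGradientAt (fun y => f y - g y) (f' - g') x := by
  rw [hasGradientAt_iff_hasFDerivAt] at *
  simpa only [map_sub] using hf.fun_sub hg

theorem const_mul (hf : HasGradientAt f f' x) (c : ℝ) :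
    HasGradientAt (fun y => c * f y) (c • f') x := by
  rw [hasGradientAt_iff_hasFDerivAt] at *
  simpa only [map_smulₛₗ, RCLike.conj_to_real] using hf.const_mul c

theorem fun_sum {ι : Type*} (s : Finset ι) {f : ι → E → ℝ} {f' : ι → E}
    (hf : ∀ i ∈ s, HasGradientAt (f i) (f' i) x) :
    HasGradientAt (fun y => ∑ i ∈ s, f i y) (∑ i ∈ s, f' i) x := by
  simp only [hasGradientAt_iff_hasFDerivAt, map_sum] at *
  exact HasFDerivAt.fun_sum hf

end HasGradientAt

theorem isMinOn_kernel_diag_sub_two_mul {X : Type*} {k : X → X → ℝ}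
    (hsymm : ∀ x x', k x x' = k x' x)
    (hpd : ∀ (m : ℕ) (x : Fin m → X) (c : Fin m → ℝ), 0 ≤ ∑ i, ∑ j, c i * c j * k (x i) (x j))
    (y : X) : IsMinOn (fun x => k x x - 2 * k x y) Set.univ y := by
  refine isMinOn_iff.mpr fun x _ => ?_
  have := hpd 2 ![x, y] ![1, -1]
  simp only [Fin.sum_univ_two, Matrix.cons_val_zero, Matrix.cons_val_one] at this
  linarith [hsymm y x]

theorem hasGradientAt_kernel_diag_sub_two_mul_zero {E : Type*} [NormedAddCommGroup E]
    [InnerProductSpace ℝ E] [CompleteSpace E] {k : E → E → ℝ}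
    (hsymm : ∀ x x', k x x' = k x' x)
    (hpd : ∀ (m : ℕ) (x : Fin m → E) (c : Fin m → ℝ), 0 ≤ ∑ i, ∑ j, c i * c j * k (x i) (x j))
    {y : E} (hdiff : DifferentiableAt ℝ (fun p : E × E => k p.1 p.2) (y, y)) :
    HasGradientAt (fun x => k x x - 2 * k x y) 0 y := by
  have hmin := (isMinOn_kernel_diag_sub_two_mul hsymm hpd y).isLocalMin Filter.univ_mem
  have hf : DifferentiableAt ℝ (fun x => k x x - 2 * k x y) y :=
    (hdiff.comp (f := fun x => (x, x)) y (by fun_prop)).fun_sub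
      ((hdiff.comp (f := fun x => (x, y)) y (by fun_prop)).const_mul 2)
  rw [hasGradientAt_iff_hasFDerivAt, map_zero, ← hmin.hasFDerivAt_eq_zero hf.hasFDerivAt]
  exact hf.hasFDerivAt

theorem centering_mulVec_apply {R ι : Type*} [CommRing R] [Fintype ι] [DecidableEq ι]
    (c : R) (β : ι → R) (j : ι) :
    (1 - c • Matrix.of fun _ _ => (1 : R)).mulVec β j = β j - c * ∑ i, β i := by
  rw [Matrix.sub_mulVec, Matrix.one_mulVec, Matrix.smul_mulVec]
  simp only [Pi.sub_apply, Pi.smul_apply, smul_eq_mul, Matrix.mulVec, dotProduct,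
    Matrix.of_apply, one_mul]

theorem Finset.sum_smul_sub_smul_sum {R M ι : Type*} [CommRing R] [AddCommGroup M] [Module R M]
    [Fintype ι] (β : ι → R) (g : ι → M) (c : R) :
    ∑ i, β i • (g i - c • ∑ j, g j) = ∑ j, (β j - c * ∑ i, β i) • g j := by
  simp only [smul_sub, sub_smul, Finset.sum_sub_distrib, ← Finset.sum_smul, smul_smul,
    ← Finset.smul_sum, ← Finset.sum_mul, mul_comm c]

theorem stmt5_general {d n : ℕ}
    (k : EuclideanSpace ℝ (Fin d) → EuclideanSpace ℝ (Fin d) → ℝ)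
    (hsymm : ∀ x x', k x x' = k x' x)
    (hpd : ∀ (m : ℕ) (x : Fin m → EuclideanSpace ℝ (Fin d)) (c : Fin m → ℝ),
      0 ≤ ∑ i, ∑ j, c i * c j * k (x i) (x j))
    (hdiff : Differentiable ℝ
      (fun p : EuclideanSpace ℝ (Fin d) × EuclideanSpace ℝ (Fin d) => k p.1 p.2))
    (y : EuclideanSpace ℝ (Fin d)) (z : Fin n → EuclideanSpace ℝ (Fin d)) (β : Fin n → ℝ) :
    gradient (fun x => k x x - 2 * k x y
        - 2 * ∑ i, β i * (k x (z i) - (n : ℝ)⁻¹ * ∑ j, k x (z j))) y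
      = - ∑ j, (((1 : Matrix (Fin n) (Fin n) ℝ)
            - (n : ℝ)⁻¹ • Matrix.of fun _ _ => (1 : ℝ)).mulVec β j)
          • ((2 : ℝ) • gradient (fun x => k x (z j)) y) := by
  have hsection (w) : HasGradientAt (fun x => k x w) (gradient (fun x => k x w) y) y :=
    (hdiff.comp (differentiable_id.prodMk (differentiable_const w)) y).hasGradientAt
  have hmean := (HasGradientAt.fun_sum Finset.univ fun j _ => hsection (z j)).const_mul (n : ℝ)⁻¹
  have hcentered := HasGradientAt.fun_sum Finset.univ fun i _ =>
    ((hsection (z i)).fun_sub hmean).const_mul (β i)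
  rw [((hasGradientAt_kernel_diag_sub_two_mul_zero hsymm hpd (hdiff _)).fun_sub
    (hcentered.const_mul 2)).gradient, zero_sub, Finset.sum_smul_sub_smul_sum, Finset.smul_sum]
  simp only [centering_mulVec_apply, smul_comm (2 : ℝ)]

/-- For the cost `g(x) = k(x,x) − 2k(x,y) − 2 Σᵢ βᵢ [k(x,zᵢ) − μ_z(x)]` with `k` a differentiable
positive definite kernel, `∇ₓ g(x)|_{x=y} = −M_{z,y} H β`, where `M_{z,y}` has columns
`2∇ₓ k(x,zⱼ)|_{x=y}` and `H = I − (1/n)𝟙` is the centering matrix. -/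
theorem stmt5 {d n : ℕ} (hn : 0 < n)
    (k : EuclideanSpace ℝ (Fin d) → EuclideanSpace ℝ (Fin d) → ℝ)
    (hsymm : ∀ x x', k x x' = k x' x)
    (hpd : ∀ (m : ℕ) (x : Fin m → EuclideanSpace ℝ (Fin d)) (c : Fin m → ℝ),
      0 ≤ ∑ i, ∑ j, c i * c j * k (x i) (x j))
    (hdiff : Differentiable ℝ
      (fun p : EuclideanSpace ℝ (Fin d) × EuclideanSpace ℝ (Fin d) => k p.1 p.2))
    (y : EuclideanSpace ℝ (Fin d)) (z : Fin n → EuclideanSpace ℝ (Fin d)) (β : Fin n → ℝ) :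
    gradient (fun x => k x x - 2 * k x y
        - 2 * ∑ i, β i * (k x (z i) - (n : ℝ)⁻¹ * ∑ j, k x (z j))) y
      = - ∑ j, (((1 : Matrix (Fin n) (Fin n) ℝ)
            - (n : ℝ)⁻¹ • Matrix.of fun _ _ => (1 : ℝ)).mulVec β j)
          • ((2 : ℝ) • gradient (fun x => k x (z j)) y) :=
  stmt5_general k hsymm hpd hdiff y z β
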